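/- arXiv:2109.14163 — 2 statements merged into one kernel-verified Lean document; each statement's English description precedes it below -/
import Mathlib

section
/- Closeness of post-selected (conditioned) distributions: let D_0 and D_1 be sub-probability distributions on a set Ω ∪ {fail} with D_0(fail) = 1 − p_0 and D_1(fail) = 1 − p_1, where p_0, p_1 ≥ 1/m − δ and the total variation distance between D_0 and D_1 is at most δ, with m ≥ 1 and δ < 1/m. Then the total variation distance between the conditional distributions D_0(·| not fail) and D_1(·| not fail) is at most 2mδ/(1 − mδ). -/
/-!
Write `p₀, p₁` for the non-fail masses. Pointwise,
`D₀ ω / p₀ - D₁ ω / p₁ = (D₀ ω - D₁ ω) / p₀ + D₁ ω (p₁ - p₀) / (p₀ p₁)`, and summing over `ω ∈ Ω`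
(where `D₁` has mass `p₁`) bounds the conditioned distance by the unconditioned one divided by `p₀`,
because `|p₁ - p₀| = |D₀ fail - D₁ fail|` is exactly the fail term of the unconditioned distance.
So the conditioned distance is at most `δ / p₀ ≤ δ / (1/m - δ) = mδ / (1 - mδ)`.
-/

open Finset

theorem sum_abs_div_sub_div_le {ι : Type*} [Fintype ι] (P Q : ι → ℝ) {p q : ℝ}
    (hp : 0 < p) (hq : 0 < q) (hQ : ∀ i, 0 ≤ Q i) (hQsum : ∑ i, Q i = q) :
    ∑ i, |P i / p - Q i / q| ≤ (∑ i, |P i - Q i| + |q - p|) / p := by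
  have hpointwise : ∀ i, |P i / p - Q i / q| ≤ |P i - Q i| / p + Q i * |q - p| / (p * q) := by
    intro i
    have hsplit : P i / p - Q i / q = (P i - Q i) / p + Q i * (q - p) / (p * q) := by
      field_simp
      ring
    rw [hsplit]
    refine (abs_add_le _ _).trans_eq ?_
    rw [abs_div, abs_of_pos hp, abs_div, abs_mul, abs_of_nonneg (hQ i), abs_of_pos (mul_pos hp hq)]
  calc ∑ i, |P i / p - Q i / q|
      ≤ ∑ i, (|P i - Q i| / p + Q i * |q - p| / (p * q)) := sum_le_sum fun i _ => hpointwise i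
    _ = (∑ i, |P i - Q i| + |q - p|) / p := by
      rw [sum_add_distrib, ← sum_div, ← sum_div, ← sum_mul, hQsum]
      field_simp

theorem div_le_mul_div_one_sub_mul {m δ p : ℝ} (hm : 0 < m) (hδ0 : 0 ≤ δ) (hδ : δ < 1 / m)
    (hp : 1 / m - δ ≤ p) : δ / p ≤ m * δ / (1 - m * δ) := by
  have hgap : 0 < 1 / m - δ := sub_pos.2 hδ
  calc δ / p ≤ δ / (1 / m - δ) := div_le_div_of_nonneg_left hδ0 hgap hp
    _ = m * δ / (1 - m * δ) := by
      rw [div_eq_div_iff hgap.ne' (by rw [lt_div_iff₀ hm] at hδ; linarith)]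
      field_simp

theorem postselected_distributions_close_general
    {Ω : Type} [Fintype Ω]
    (D0 D1 : Option Ω → ℝ) (m δ : ℝ)
    (hD1nonneg : ∀ ω, 0 ≤ D1 ω)
    (hD1sum : ∑ ω : Option Ω, D1 ω = 1)
    (hδ : δ < 1 / m)
    (hp0 : 1 / m - δ ≤ 1 - D0 none)
    (hp1 : 1 / m - δ ≤ 1 - D1 none)
    (hTV : (1 / 2) * ∑ ω : Option Ω, |D0 ω - D1 ω| ≤ δ) :
    (1 / 2) * ∑ ω : Ω, |D0 (some ω) / (1 - D0 none) - D1 (some ω) / (1 - D1 none)|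
      ≤ 2 * m * δ / (1 - m * δ) := by
  rw [Fintype.sum_option] at hD1sum hTV
  have hδ0 : 0 ≤ δ := by
    have : 0 ≤ ∑ ω : Ω, |D0 (some ω) - D1 (some ω)| := sum_nonneg fun _ _ => abs_nonneg _
    linarith [abs_nonneg (D0 none - D1 none)]
  have hm : 0 < m := by
    by_contra! hm
    linarith [one_div_nonpos.2 hm]
  have hgap : 0 < 1 / m - δ := sub_pos.2 hδ
  have hmass := sum_abs_div_sub_div_le (fun ω => D0 (some ω)) (fun ω => D1 (some ω))
    (hgap.trans_le hp0) (hgap.trans_le hp1) (fun ω => hD1nonneg _) (by linarith)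
  rw [sub_sub_sub_cancel_left] at hmass
  calc (1 / 2) * ∑ ω : Ω, |D0 (some ω) / (1 - D0 none) - D1 (some ω) / (1 - D1 none)|
      ≤ δ / (1 - D0 none) := by
        rw [le_div_iff₀ (hgap.trans_le hp0)]
        rw [le_div_iff₀ (hgap.trans_le hp0)] at hmass
        linarith
    _ ≤ m * δ / (1 - m * δ) := div_le_mul_div_one_sub_mul hm hδ0 hδ hp0
    _ ≤ 2 * m * δ / (1 - m * δ) := by
        have : 0 < 1 - m * δ := by rw [lt_div_iff₀ hm] at hδ; linarith
        gcongr
        linarith [mul_nonneg hm.le hδ0]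

/-- Closeness of post-selected (conditioned) distributions.  `D0, D1` are
distributions on `Ω ∪ {fail}` (modeled as `Option Ω`, `none` = fail) with
non-fail probabilities `p_b = 1 − D_b(fail) ≥ 1/m − δ`, total variation
distance at most `δ`, `m ≥ 1` and `δ < 1/m`.  Then the total variation
distance between the conditional distributions `D_b(·|not fail)` is at most
`2mδ/(1 − mδ)`. -/
theorem postselected_distributions_close
    {Ω : Type} [Fintype Ω]
    (D0 D1 : Option Ω → ℝ) (m δ : ℝ)
    (hD0nonneg : ∀ ω, 0 ≤ D0 ω) (hD1nonneg : ∀ ω, 0 ≤ D1 ω)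
    (hD0sum : ∑ ω : Option Ω, D0 ω = 1) (hD1sum : ∑ ω : Option Ω, D1 ω = 1)
    (hm : 1 ≤ m) (hδ0 : 0 ≤ δ) (hδ : δ < 1 / m)
    (hp0 : 1 / m - δ ≤ 1 - D0 none)
    (hp1 : 1 / m - δ ≤ 1 - D1 none)
    (hTV : (1 / 2) * ∑ ω : Option Ω, |D0 ω - D1 ω| ≤ δ) :
    (1 / 2) * ∑ ω : Ω, |D0 (some ω) / (1 - D0 none) - D1 (some ω) / (1 - D1 none)|
      ≤ 2 * m * δ / (1 - m * δ) :=
  postselected_distributions_close_general D0 D1 m δ hD1nonneg hD1sum hδ hp0 hp1 hTV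
end

section
/- Reprogrammed random oracle distributional identity: let H, H' be independent uniformly random functions from {0,1}^s to {0,1}^r, let R be uniform over {0,1}^s independent of H, H', and let sk be a fixed string in {0,1}^r. Define h_1 := H(R) ⊕ sk with oracles (O_A, O_B) := (H_{R→H'}, H) in world 1, and let h_2 be uniform over {0,1}^r with oracles (O_A, O_B) := (H', H'_{R→h_2⊕sk}) in world 2, where G_{R→v} denotes G reprogrammed to value v (or to H'(R)) at input R. Then the joint distributions of (h, O_A, O_B) in world 1 and world 2 are identical. -/
set_option synthInstance.maxHeartbeats 1000000 in
lemma map_uniform_eq_of_card {α β γ : Type*} [Fintype α] [Fintype β] [DecidableEq γ]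
    [Nonempty α] [Nonempty β] (f : α → γ) (g : β → γ)
    (h : ∀ y : γ, (Finset.univ.filter (fun a => y = f a)).card * Fintype.card β
      = (Finset.univ.filter (fun b => y = g b)).card * Fintype.card α) :
    (PMF.uniformOfFintype α).map f = (PMF.uniformOfFintype β).map g := by
  ext y
  rw [PMF.map_apply, PMF.map_apply, tsum_fintype, tsum_fintype]
  simp only [PMF.uniformOfFintype_apply]
  rw [← Finset.sum_filter, ← Finset.sum_filter, Finset.sum_const, Finset.sum_const,
    nsmul_eq_mul, nsmul_eq_mul, ← div_eq_mul_inv, ← div_eq_mul_inv]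
  rw [ENNReal.div_eq_div_iff (by exact_mod_cast Fintype.card_ne_zero)
    (ENNReal.natCast_ne_top _) (by exact_mod_cast Fintype.card_ne_zero)
    (ENNReal.natCast_ne_top _)]
  rw [mul_comm, mul_comm (↑(Fintype.card α) : ENNReal)]
  exact_mod_cast h y


set_option synthInstance.maxHeartbeats 1000000 in
set_option maxHeartbeats 1000000 in
/-- Reprogrammed random-oracle distributional identity.  Keys are `r`-bit
strings (`Fin r → ZMod 2`, with `⊕ = +`) and oracle inputs are `s`-bit strings
(`Fin s → Bool`).  World 1 samples uniform `H, H', R` and outputs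
`(h, O_A, O_B) = (H(R) ⊕ sk, H_{R→H'}, H)`; world 2 samples uniform `H', R, h`
and outputs `(h, H', H'_{R→h⊕sk})`, where reprogramming is `Function.update`.
The joint distributions of `(h, O_A, O_B)` in the two worlds are identical. -/
theorem reprogrammed_oracle_identity (s r : ℕ) (sk : Fin r → ZMod 2) :
    (PMF.uniformOfFintype
        (((Fin s → Bool) → (Fin r → ZMod 2))
          × ((Fin s → Bool) → (Fin r → ZMod 2)) × (Fin s → Bool))).map
      (fun w => (w.1 w.2.2 + sk, Function.update w.1 w.2.2 (w.2.1 w.2.2), w.1))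
    = (PMF.uniformOfFintype
        (((Fin s → Bool) → (Fin r → ZMod 2))
          × (Fin s → Bool) × (Fin r → ZMod 2))).map
      (fun w => (w.2.2, w.1, Function.update w.1 w.2.1 (w.2.2 + sk))) := by
  have hsk : ∀ x : Fin r → ZMod 2, x + sk + sk = x := by
    intro x; funext i
    simp [add_assoc, Pi.add_apply, CharTwo.add_self_eq_zero]
  apply map_uniform_eq_of_card
  rintro ⟨h0, A, B⟩
  have e : {w : ((Fin s → Bool) → (Fin r → ZMod 2))
          × ((Fin s → Bool) → (Fin r → ZMod 2)) × (Fin s → Bool) //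
        (h0, A, B) = (w.1 w.2.2 + sk, Function.update w.1 w.2.2 (w.2.1 w.2.2), w.1)}
        × (Fin r → ZMod 2)
      ≃ {w : ((Fin s → Bool) → (Fin r → ZMod 2))
          × (Fin s → Bool) × (Fin r → ZMod 2) //
        (h0, A, B) = (w.2.2, w.1, Function.update w.1 w.2.1 (w.2.2 + sk))}
        × ((Fin s → Bool) → (Fin r → ZMod 2)) := by
    refine ⟨fun p => ⟨⟨(Function.update p.1.1.1 p.1.1.2.2 (p.1.1.2.1 p.1.1.2.2),
        p.1.1.2.2, p.1.1.1 p.1.1.2.2 + sk), ?_⟩,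
        Function.update p.1.1.2.1 p.1.1.2.2 p.2⟩,
      fun q => ⟨⟨(Function.update q.1.1.1 q.1.1.2.1 (q.1.1.2.2 + sk),
        Function.update q.2 q.1.1.2.1 (q.1.1.1 q.1.1.2.1), q.1.1.2.1), ?_⟩,
        q.2 q.1.1.2.1⟩, ?_, ?_⟩
    · obtain ⟨⟨⟨H, H', R⟩, hw⟩, v⟩ := p
      simp only [Prod.mk.injEq] at hw ⊢
      refine ⟨hw.1, hw.2.1, ?_⟩
      rw [Function.update_idem, hsk, Function.update_eq_self]
      exact hw.2.2
    · obtain ⟨⟨⟨A', R, h'⟩, hw⟩, G⟩ := q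
      simp only [Prod.mk.injEq] at hw ⊢
      refine ⟨?_, ?_, hw.2.2⟩
      · rw [Function.update_self, hsk]; exact hw.1
      · rw [Function.update_self, Function.update_idem, Function.update_eq_self]
        exact hw.2.1
    · rintro ⟨⟨⟨H, H', R⟩, hw⟩, v⟩
      simp only [Prod.mk.injEq, Subtype.mk.injEq, Function.update_self,
        Function.update_idem, hsk, Function.update_eq_self, and_true, true_and]
    · rintro ⟨⟨⟨A', R, h'⟩, hw⟩, G⟩
      simp only [Prod.mk.injEq, Subtype.mk.injEq, Function.update_self,
        Function.update_idem, hsk, Function.update_eq_self, and_true, true_and]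
  have key := Nat.card_congr e
  rw [Nat.card_prod, Nat.card_prod] at key
  have c1 : (Finset.univ.filter (fun w : ((Fin s → Bool) → (Fin r → ZMod 2))
          × ((Fin s → Bool) → (Fin r → ZMod 2)) × (Fin s → Bool) =>
        (h0, A, B) = (w.1 w.2.2 + sk, Function.update w.1 w.2.2 (w.2.1 w.2.2), w.1))).card
      = Nat.card {w : ((Fin s → Bool) → (Fin r → ZMod 2))
          × ((Fin s → Bool) → (Fin r → ZMod 2)) × (Fin s → Bool) //
        (h0, A, B) = (w.1 w.2.2 + sk, Function.update w.1 w.2.2 (w.2.1 w.2.2), w.1)} := by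
    letI : Fintype {w : ((Fin s → Bool) → (Fin r → ZMod 2))
          × ((Fin s → Bool) → (Fin r → ZMod 2)) × (Fin s → Bool) //
        (h0, A, B) = (w.1 w.2.2 + sk, Function.update w.1 w.2.2 (w.2.1 w.2.2), w.1)} :=
      Subtype.fintype _
    rw [Nat.card_eq_fintype_card, Fintype.card_subtype]
  have c2 : (Finset.univ.filter (fun w : ((Fin s → Bool) → (Fin r → ZMod 2))
          × (Fin s → Bool) × (Fin r → ZMod 2) =>
        (h0, A, B) = (w.2.2, w.1, Function.update w.1 w.2.1 (w.2.2 + sk)))).card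
      = Nat.card {w : ((Fin s → Bool) → (Fin r → ZMod 2))
          × (Fin s → Bool) × (Fin r → ZMod 2) //
        (h0, A, B) = (w.2.2, w.1, Function.update w.1 w.2.1 (w.2.2 + sk))} := by
    letI : Fintype {w : ((Fin s → Bool) → (Fin r → ZMod 2))
          × (Fin s → Bool) × (Fin r → ZMod 2) //
        (h0, A, B) = (w.2.2, w.1, Function.update w.1 w.2.1 (w.2.2 + sk))} :=
      Subtype.fintype _
    rw [Nat.card_eq_fintype_card, Fintype.card_subtype]
  rw [c1, c2, ← Nat.card_eq_fintype_card, ← Nat.card_eq_fintype_card,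
    Nat.card_prod, Nat.card_prod, Nat.card_prod, Nat.card_prod]
  zify at key ⊢
  linear_combination ((Nat.card ((Fin s → Bool) → (Fin r → ZMod 2)) : ℤ)
    * (Nat.card (Fin s → Bool) : ℤ)) * key
end
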